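/- Let u₁, u₂ : ℂ² → ℂ be smooth (infinitely real-differentiable) functions with compact support. Then the function z ↦ ((∂̄₁u₂)(z) − (∂̄₂u₁)(z))/z₁ is Lebesgue-integrable on ℂ². (This is the integrability claim of the Stokes–Leray formula in complex dimension two: the form γ ∧ du with γ = (dz₁ ∧ dz₂)/z₁ is integrable on ℂ² despite the pole of γ along {z₁ = 0}.) -/

import Mathlib

open MeasureTheory

section StokesLerayAux

lemma aux_f (R : ℝ) : Integrable (Set.indicator (Set.Icc (-R) R)
    (fun x : ℝ => |x| ^ (-(1/2) : ℝ))) volume := by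
  set p : ℝ := -(1/2) with hp
  set g : ℝ → ℝ := fun x => |x| ^ p with hg
  have hgm : Measurable g := by fun_prop
  set F : ℝ → ℝ := Set.indicator (Set.Ioc 0 R) g with hFdef
  have hF : Integrable F volume := by
    rw [hFdef, integrable_indicator_iff measurableSet_Ioc]
    rcases le_or_gt R 0 with hR | hR
    · rw [Set.Ioc_eq_empty (by intro h; linarith)]
      exact integrableOn_empty
    · have h1 : IntegrableOn (fun x : ℝ => x ^ p) (Set.Ioc 0 R) volume := by
        rw [← intervalIntegrable_iff_integrableOn_Ioc_of_le hR.le]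
        exact intervalIntegral.intervalIntegrable_rpow' (by norm_num)
      exact h1.congr_fun (fun x hx => by rw [hg]; simp [abs_of_pos hx.1]) measurableSet_Ioc
  have hFneg : Integrable (fun x => F (-x)) volume := hF.comp_neg
  have hFnn : ∀ x, 0 ≤ F x := fun x =>
    Set.indicator_nonneg (fun y _ => Real.rpow_nonneg (abs_nonneg y) p) x
  refine (hF.add hFneg).mono' ((hgm.indicator measurableSet_Icc).aestronglyMeasurable) ?_
  refine Filter.Eventually.of_forall fun x => ?_
  simp only [Pi.add_apply]
  by_cases hx : x ∈ Set.Icc (-R) R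
  · rw [Set.indicator_of_mem hx, Real.norm_eq_abs,
      abs_of_nonneg (Real.rpow_nonneg (abs_nonneg x) p)]
    rcases lt_trichotomy x 0 with h | h | h
    · have h2 : F (-x) = g (-x) :=
        Set.indicator_of_mem (Set.mem_Ioc.2 ⟨by linarith, by linarith [hx.1]⟩) g
      have h3 : g (-x) = g x := by simp [hg, abs_neg]
      have := hFnn x
      rw [h2, h3] at *
      linarith
    · subst h
      have : g 0 = 0 := by simp [hg, Real.zero_rpow (show p ≠ 0 by norm_num)]
      rw [show |(0:ℝ)| ^ p = g 0 from rfl, this]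
      linarith [hFnn 0, hFnn (-0)]
    · have h2 : F x = g x := Set.indicator_of_mem (Set.mem_Ioc.2 ⟨h, hx.2⟩) g
      have := hFnn (-x)
      rw [show |x| ^ p = g x from rfl, ← h2]
      linarith
  · rw [Set.indicator_of_notMem hx]
    simpa using add_nonneg (hFnn x) (hFnn (-x))


lemma null_re : volume {z : ℂ | z.re = 0} = 0 := by
  have h : {z : ℂ | z.re = 0} =
      Complex.measurableEquivRealProd ⁻¹' (({0} : Set ℝ) ×ˢ (Set.univ : Set ℝ)) := by
    ext z
    simp [Complex.measurableEquivRealProd_apply, eq_comm]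
  rw [h, Complex.volume_preserving_equiv_real_prod.measure_preimage
    ((MeasurableSet.singleton 0).prod MeasurableSet.univ).nullMeasurableSet]
  rw [Measure.volume_eq_prod, Measure.prod_prod]
  simp

lemma null_im : volume {z : ℂ | z.im = 0} = 0 := by
  have h : {z : ℂ | z.im = 0} =
      Complex.measurableEquivRealProd ⁻¹' ((Set.univ : Set ℝ) ×ˢ ({0} : Set ℝ)) := by
    ext z
    simp [Complex.measurableEquivRealProd_apply, eq_comm]
  rw [h, Complex.volume_preserving_equiv_real_prod.measure_preimage
    (MeasurableSet.univ.prod (MeasurableSet.singleton 0)).nullMeasurableSet]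
  rw [Measure.volume_eq_prod, Measure.prod_prod]
  simp

lemma aux_inv_norm (R : ℝ) :
    IntegrableOn (fun z : ℂ => ‖z‖⁻¹) (Metric.closedBall 0 R) volume := by
  set p : ℝ := -(1/2) with hp
  set f : ℝ → ℝ := Set.indicator (Set.Icc (-R) R) (fun x : ℝ => |x| ^ p) with hfdef
  have hf : Integrable f volume := aux_f R
  have hfnn : ∀ x, 0 ≤ f x := fun x =>
    Set.indicator_nonneg (fun y _ => Real.rpow_nonneg (abs_nonneg y) p) x
  -- the majorant on ℂ
  have hH : Integrable (fun z : ℂ => f z.re * f z.im) volume := by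
    have h1 : Integrable (fun q : ℝ × ℝ => f q.1 * f q.2) (volume.prod volume) :=
      hf.mul_prod hf
    rw [← Measure.volume_eq_prod] at h1
    have := (Complex.volume_preserving_equiv_real_prod.symm
        Complex.measurableEquivRealProd).integrable_comp_emb
        (MeasurableEquiv.measurableEmbedding _) (g := fun z : ℂ => f z.re * f z.im)
    exact this.mp h1
  rw [← integrable_indicator_iff measurableSet_closedBall]
  refine hH.mono' ?_ ?_
  · exact ((measurable_norm.inv).indicator measurableSet_closedBall).aestronglyMeasurable
  · -- a.e. bound
    have hne : ∀ᵐ z : ℂ, z.re ≠ 0 ∧ z.im ≠ 0 := by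
      have h1 : ∀ᵐ z : ℂ, z.re ≠ 0 := by
        rw [ae_iff]; simpa using null_re
      have h2 : ∀ᵐ z : ℂ, z.im ≠ 0 := by
        rw [ae_iff]; simpa using null_im
      exact h1.and h2
    filter_upwards [hne] with z hz
    by_cases hzb : z ∈ Metric.closedBall (0 : ℂ) R
    · rw [Set.indicator_of_mem hzb]
      have hzr : ‖z‖ ≤ R := by simpa using Metric.mem_closedBall.1 hzb
      have hre : z.re ∈ Set.Icc (-R) R := by
        constructor
        · linarith [abs_le.1 (le_trans (Complex.abs_re_le_norm z) hzr) |>.1]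
        · linarith [abs_le.1 (le_trans (Complex.abs_re_le_norm z) hzr) |>.2]
      have him : z.im ∈ Set.Icc (-R) R := by
        constructor
        · linarith [abs_le.1 (le_trans (Complex.abs_im_le_norm z) hzr) |>.1]
        · linarith [abs_le.1 (le_trans (Complex.abs_im_le_norm z) hzr) |>.2]
      rw [hfdef]
      simp only [Set.indicator_of_mem hre, Set.indicator_of_mem him]
      rw [← Real.mul_rpow (abs_nonneg _) (abs_nonneg _)]
      set t : ℝ := |z.re| * |z.im| with ht
      have htpos : 0 < t := mul_pos (abs_pos.2 hz.1) (abs_pos.2 hz.2)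
      have hzpos : 0 < ‖z‖ := by
        rw [norm_pos_iff]
        intro h0
        exact hz.1 (by simp [h0])
      have hts : t ≤ ‖z‖ ^ 2 := by
        have : ‖z‖ ^ 2 = z.re ^ 2 + z.im ^ 2 := by
          rw [Complex.sq_norm, Complex.normSq_apply]; ring
        nlinarith [sq_nonneg (|z.re| - |z.im|), sq_abs z.re, sq_abs z.im, abs_nonneg z.re,
          abs_nonneg z.im]
      have hsq : Real.sqrt t ≤ ‖z‖ := by
        rw [show ‖z‖ = Real.sqrt (‖z‖ ^ 2) from (Real.sqrt_sq hzpos.le).symm]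
        exact Real.sqrt_le_sqrt hts
      have hsqpos : 0 < Real.sqrt t := Real.sqrt_pos.2 htpos
      have key : ‖z‖⁻¹ ≤ (Real.sqrt t)⁻¹ := by
        exact inv_anti₀ hsqpos hsq
      rw [Real.norm_eq_abs, abs_of_nonneg (inv_nonneg.2 hzpos.le)]
      calc ‖z‖⁻¹ ≤ (Real.sqrt t)⁻¹ := key
        _ = t ^ p := by
          rw [hp, Real.rpow_neg htpos.le, ← Real.sqrt_eq_rpow]
    · rw [Set.indicator_of_notMem hzb]
      simpa using mul_nonneg (hfnn z.re) (hfnn z.im)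

end StokesLerayAux

/-- The first antiholomorphic partial derivative `∂̄₁F` of a map `F : ℂ² → ℂ`:
`∂̄₁F(z) = (1/2)·(DF(z)(e₁) + i·DF(z)(i·e₁))`. -/
noncomputable def dbar1 (F : ℂ × ℂ → ℂ) (z : ℂ × ℂ) : ℂ :=
  (1 / 2 : ℂ) * (fderiv ℝ F z (1, 0) + Complex.I * fderiv ℝ F z (Complex.I, 0))

/-- The second antiholomorphic partial derivative `∂̄₂F` of a map `F : ℂ² → ℂ`:
`∂̄₂F(z) = (1/2)·(DF(z)(e₂) + i·DF(z)(i·e₂))`. -/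
noncomputable def dbar2 (F : ℂ × ℂ → ℂ) (z : ℂ × ℂ) : ℂ :=
  (1 / 2 : ℂ) * (fderiv ℝ F z (0, 1) + Complex.I * fderiv ℝ F z (0, Complex.I))

/-- Integrability claim of the Stokes–Leray formula in complex dimension two:
for smooth compactly supported `u₁, u₂ : ℂ² → ℂ`, the function
`z ↦ ((∂̄₁u₂)(z) − (∂̄₂u₁)(z))/z₁` is Lebesgue-integrable on `ℂ²`. -/
theorem integrable_stokes_leray_dim_two
    (u₁ u₂ : ℂ × ℂ → ℂ)
    (hu₁ : ContDiff ℝ (⊤ : ℕ∞) u₁) (hu₂ : ContDiff ℝ (⊤ : ℕ∞) u₂)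
    (hc₁ : HasCompactSupport u₁) (hc₂ : HasCompactSupport u₂) :
    Integrable (fun z : ℂ × ℂ => (dbar1 u₂ z - dbar2 u₁ z) / z.1) volume := by
  set g : ℂ × ℂ → ℂ := fun z => dbar1 u₂ z - dbar2 u₁ z with hgdef
  have hcont : Continuous g := by
    have h2 : Continuous (fderiv ℝ u₂) := hu₂.continuous_fderiv (by simp)
    have h1 : Continuous (fderiv ℝ u₁) := hu₁.continuous_fderiv (by simp)
    unfold g
    unfold dbar1 dbar2
    fun_prop
  have hsupp : HasCompactSupport g := by
    have h2 : HasCompactSupport (fderiv ℝ u₂) := hc₂.fderiv ℝ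
    have h1 : HasCompactSupport (fderiv ℝ u₁) := hc₁.fderiv ℝ
    have hd1 : HasCompactSupport (dbar1 u₂) := by
      have := h2.comp_left
        (g := fun L : (ℂ × ℂ) →L[ℝ] ℂ =>
          (1 / 2 : ℂ) * (L (1, 0) + Complex.I * L (Complex.I, 0))) (by simp)
      exact this
    have hd2 : HasCompactSupport (dbar2 u₁) := by
      have := h1.comp_left
        (g := fun L : (ℂ × ℂ) →L[ℝ] ℂ =>
          (1 / 2 : ℂ) * (L (0, 1) + Complex.I * L (0, Complex.I))) (by simp)
      exact this
    exact hd1.comp₂_left hd2 (sub_zero 0)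
  obtain ⟨C, hC⟩ := hsupp.exists_bound_of_continuous hcont
  have hC0 : 0 ≤ C := le_trans (norm_nonneg _) (hC 0)
  obtain ⟨R, hR⟩ := hsupp.isBounded.subset_closedBall (0 : ℂ × ℂ)
  -- majorant
  set M : ℂ × ℂ → ℝ := fun z =>
    (Set.indicator (Metric.closedBall (0:ℂ) R) (fun w => C * ‖w‖⁻¹) z.1) *
    (Set.indicator (Metric.closedBall (0:ℂ) R) (fun _ => (1:ℝ)) z.2) with hMdef
  have hM : Integrable M volume := by
    have hM1 : Integrable
        (Set.indicator (Metric.closedBall (0:ℂ) R) (fun w : ℂ => C * ‖w‖⁻¹)) volume := by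
      rw [integrable_indicator_iff measurableSet_closedBall]
      exact (aux_inv_norm R).const_mul C
    have hM2 : Integrable
        (Set.indicator (Metric.closedBall (0:ℂ) R) (fun _ : ℂ => (1:ℝ))) volume := by
      rw [integrable_indicator_iff measurableSet_closedBall]
      exact integrableOn_const measure_closedBall_lt_top.ne
    have := hM1.mul_prod hM2
    rwa [← Measure.volume_eq_prod] at this
  refine hM.mono' ?_ ?_
  · exact (hcont.aestronglyMeasurable.mul
      measurable_fst.inv.aestronglyMeasurable).congr
      (Filter.Eventually.of_forall fun z => (div_eq_mul_inv _ _).symm)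
  · refine Filter.Eventually.of_forall fun z => ?_
    show ‖g z / z.1‖ ≤ M z
    have hMnn : 0 ≤ M z := by
      apply mul_nonneg
      · exact Set.indicator_nonneg
          (fun w _ => mul_nonneg hC0 (inv_nonneg.2 (norm_nonneg w))) _
      · exact Set.indicator_nonneg (fun _ _ => zero_le_one) _
    by_cases hz : g z = 0
    · simp only [hz, zero_div, norm_zero]; exact hMnn
    · have hzK : z ∈ Metric.closedBall (0 : ℂ × ℂ) R :=
        hR (subset_tsupport g (by simpa using hz))
      have hzn : ‖z‖ ≤ R := by simpa using Metric.mem_closedBall.1 hzK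
      have hz1 : z.1 ∈ Metric.closedBall (0:ℂ) R := by
        simp only [Metric.mem_closedBall, dist_zero_right]
        exact le_trans (norm_fst_le z) hzn
      have hz2 : z.2 ∈ Metric.closedBall (0:ℂ) R := by
        simp only [Metric.mem_closedBall, dist_zero_right]
        exact le_trans (norm_snd_le z) hzn
      rw [hMdef]
      simp only [Set.indicator_of_mem hz1, Set.indicator_of_mem hz2, mul_one]
      rw [norm_div, div_eq_mul_inv]
      exact mul_le_mul_of_nonneg_right (hC z) (inv_nonneg.2 (norm_nonneg _))
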